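/- Furstenberg's disjointness theorem (special case used): if λ₃ is a shift-invariant measure on a product of binary sequence spaces with Kolmogorov–Sinai entropy zero, and η is an i.i.d. Bernoulli(p) product measure on {0,1}^ℕ, then every shift-invariant joining of λ₃ and η equals the product measure λ₃ ⊗ η. -/

import Mathlib

open MeasureTheory ProbabilityTheory Filter Topology
open scoped ENNReal

/-- The left shift on binary sequences. -/
def binShift (a : ℕ → Bool) (i : ℕ) : Bool := a (i + 1)

/-- The product shift on a product of two binary sequence spaces. -/
def pairShift : (ℕ → Bool) × (ℕ → Bool) → (ℕ → Bool) × (ℕ → Bool) :=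
  Prod.map binShift binShift

/-- Shannon entropy of the length-`n` block distribution of a measure on a
product of two binary sequence spaces (alphabet `Bool × Bool`). -/
noncomputable def blockEntropyPair
    (μ : Measure ((ℕ → Bool) × (ℕ → Bool))) (n : ℕ) : ℝ :=
  ∑ w : Fin n → Bool × Bool,
    Real.negMulLog
      ((μ {q : (ℕ → Bool) × (ℕ → Bool) |
          ∀ i : Fin n, (q.1 (i : ℕ), q.2 (i : ℕ)) = w i}).toReal)

/-- Zero Kolmogorov–Sinai entropy for a shift-invariant measure on the
product of two binary sequence spaces. -/
def HasZeroEntropyPair (μ : Measure ((ℕ → Bool) × (ℕ → Bool))) : Prop :=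
  Tendsto (fun n : ℕ => blockEntropyPair μ n / n) atTop (𝓝 0)

/-- Bernoulli(p) measure on `Bool` (`true` with probability `p`). -/
noncomputable def bernoulliBool (p : ℝ) : Measure Bool :=
  (ENNReal.ofReal p) • Measure.dirac true +
    (ENNReal.ofReal (1 - p)) • Measure.dirac false

/-!
Write `ε_j = e ∘ T^[j]` for the i.i.d. coordinates, and `E_k`, `X_m` for the blocks of length `k`
of `ε` and of length `m` of the zero-entropy process. Conditioning on less can only increase
entropy and `T` preserves the joining, so `d = H(ε_k | E_k, X_m)` bounds `H(ε_j | E_j, X_n)`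
whenever `k ≤ j` and `j + m ≤ n`. By the chain rule,
`n H(ε_0) = H(E_n) ≤ H(E_n, X_n) = H(X_n) + ∑_{j<n} H(ε_j | E_j, X_n)`, where all but `k + m`
terms are at most `d` and the others at most `H(ε_0)`; hence
`(n - k - m) (H(ε_0) - d) ≤ H(X_n) = o(n)`, and `d = H(ε_0)`. The chain rule then gives
`H(E_k, X_m) = H(E_k) + H(X_m)`, the equality case of subadditivity: `E_k` and `X_m` are
independent. The events `{E_n = a, X_n = b}` generate, so the joining is the product.
-/

open Real InformationTheory

namespace Furstenberg

section Gibbs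

lemma mul_log_sub_mul_log_eq {r y : ℝ} (hy : 0 < y) :
    r * log r - r * log y = y * klFun (r / y) + (r - y) := by
  rcases eq_or_ne r 0 with rfl | hr
  · simp [klFun_zero]
  · rw [klFun_apply, log_div hr hy.ne']
    field_simp
    ring

lemma sub_le_mul_log_sub_mul_log {r y : ℝ} (hr : 0 ≤ r) (hy : 0 ≤ y) (hry : y = 0 → r = 0) :
    r - y ≤ r * log r - r * log y := by
  rcases hy.eq_or_lt with rfl | hy
  · simp [hry rfl]
  · rw [mul_log_sub_mul_log_eq hy]
    linarith [mul_nonneg hy.le (klFun_nonneg (div_nonneg hr hy.le))]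

lemma eq_of_mul_log_sub_mul_log_eq_sub {r y : ℝ} (hr : 0 ≤ r) (hy : 0 ≤ y)
    (hry : y = 0 → r = 0) (h : r * log r - r * log y = r - y) : r = y := by
  rcases hy.eq_or_lt with rfl | hy
  · exact hry rfl
  · rw [mul_log_sub_mul_log_eq hy, add_eq_right, mul_eq_zero,
      klFun_eq_zero_iff (div_nonneg hr hy.le), div_eq_one_iff_eq hy.ne'] at h
    exact h.resolve_left hy.ne'

variable {ι : Type*} [Fintype ι] {r y : ι → ℝ}

theorem sum_mul_log_le_sum_mul_log (hr : ∀ i, 0 ≤ r i) (hy : ∀ i, 0 ≤ y i)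
    (hry : ∀ i, y i = 0 → r i = 0) (hsum : ∑ i, y i ≤ ∑ i, r i) :
    ∑ i, r i * log (y i) ≤ ∑ i, r i * log (r i) := by
  have := Finset.sum_le_sum fun i (_ : i ∈ Finset.univ) =>
    sub_le_mul_log_sub_mul_log (hr i) (hy i) (hry i)
  simp only [Finset.sum_sub_distrib] at this
  linarith

theorem eq_of_sum_mul_log_eq (hr : ∀ i, 0 ≤ r i) (hy : ∀ i, 0 ≤ y i)
    (hry : ∀ i, y i = 0 → r i = 0) (hsum : ∑ i, y i ≤ ∑ i, r i)
    (h : ∑ i, r i * log (y i) = ∑ i, r i * log (r i)) : r = y := by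
  set gap : ι → ℝ := fun i => r i * log (r i) - r i * log (y i) - (r i - y i)
  have hgap : ∀ i ∈ Finset.univ, 0 ≤ gap i := fun i _ =>
    sub_nonneg.2 (sub_le_mul_log_sub_mul_log (hr i) (hy i) (hry i))
  have hsum_gap : ∑ i, gap i = 0 := by
    refine le_antisymm ?_ (Finset.sum_nonneg hgap)
    simp only [gap, Finset.sum_sub_distrib]
    linarith
  funext i
  refine eq_of_mul_log_sub_mul_log_eq_sub (hr i) (hy i) (hry i) ?_
  exact sub_eq_zero.1 ((Finset.sum_eq_zero_iff_of_nonneg hgap).1 hsum_gap i (Finset.mem_univ i))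

end Gibbs

lemma measureReal_preimage_singleton_le_comp {Ω α β : Type*} [MeasurableSpace Ω]
    (μ : Measure Ω) [IsFiniteMeasure μ] (f : Ω → α) (h : α → β) (a : α) :
    μ.real (f ⁻¹' {a}) ≤ μ.real ((h ∘ f) ⁻¹' {h a}) :=
  measureReal_mono fun ω hω => by simp_all

lemma measureReal_pair_eq_zero_of_mul_eq_zero {Ω α β : Type*} [MeasurableSpace Ω]
    {μ : Measure Ω} [IsFiniteMeasure μ] {f : Ω → α} {g : Ω → β} (q : α × β)
    (hq : μ.real (f ⁻¹' {q.1}) * μ.real (g ⁻¹' {q.2}) = 0) :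
    μ.real ((fun ω => (f ω, g ω)) ⁻¹' {q}) = 0 := by
  refine le_antisymm ?_ measureReal_nonneg
  rcases mul_eq_zero.1 hq with h | h
  · exact h ▸ measureReal_preimage_singleton_le_comp μ _ Prod.fst q
  · exact h ▸ measureReal_preimage_singleton_le_comp μ _ Prod.snd q

section Entropy

variable {Ω α β γ : Type*} [MeasurableSpace Ω] [Fintype α] [Fintype β] [Fintype γ]
  {μ : Measure Ω}

noncomputable def entropy (μ : Measure Ω) (f : Ω → α) : ℝ :=
  ∑ a, negMulLog (μ.real (f ⁻¹' {a}))

noncomputable def condEntropy (μ : Measure Ω) (f : Ω → α) (g : Ω → β) : ℝ :=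
  entropy μ (fun ω => (f ω, g ω)) - entropy μ g

lemma entropy_eq_neg_sum (μ : Measure Ω) (f : Ω → α) :
    entropy μ f = -∑ a, μ.real (f ⁻¹' {a}) * log (μ.real (f ⁻¹' {a})) := by
  simp [entropy, negMulLog, Finset.sum_neg_distrib]

lemma entropy_comp_of_injective (f : Ω → α) {e : α → β} (he : Function.Injective e) :
    entropy μ (e ∘ f) = entropy μ f := by
  classical
  have hfiber : ∀ a, (e ∘ f) ⁻¹' {e a} = f ⁻¹' {a} := fun a => by
    ext ω; simp [he.eq_iff]
  have hempty : ∀ b ∉ Set.range e, (e ∘ f) ⁻¹' {b} = ∅ := fun b hb => by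
    ext ω; simpa using fun h => hb ⟨f ω, h⟩
  refine (Fintype.sum_of_injective e he _ _ (fun b hb => ?_) fun a => ?_).symm
  · simp [hempty b hb]
  · rw [hfiber]

lemma entropy_eq_zero_of_unique [IsProbabilityMeasure μ] [Unique α] (f : Ω → α) :
    entropy μ f = 0 := by
  have : f ⁻¹' {default} = Set.univ := Set.eq_univ_of_forall fun ω => Unique.eq_default (f ω)
  simp [entropy, this]

variable [MeasurableSpace α] [MeasurableSingletonClass α]
  [MeasurableSpace β] [MeasurableSingletonClass β] {f : Ω → α} {g : Ω → β}

lemma entropy_comp_of_measurePreserving {T : Ω → Ω} (hT : MeasurePreserving T μ μ)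
    (hf : Measurable f) : entropy μ (fun ω => f (T ω)) = entropy μ f := by
  refine Finset.sum_congr rfl fun a _ => ?_
  rw [measureReal_def, measureReal_def]
  congr 2
  exact hT.measure_preimage (hf (measurableSet_singleton a)).nullMeasurableSet

lemma condEntropy_comp_of_measurePreserving {T : Ω → Ω} (hT : MeasurePreserving T μ μ)
    (hf : Measurable f) (hg : Measurable g) :
    condEntropy μ (fun ω => f (T ω)) (fun ω => g (T ω)) = condEntropy μ f g := by
  rw [condEntropy, condEntropy, ← entropy_comp_of_measurePreserving hT hg,
    ← entropy_comp_of_measurePreserving hT (hf.prodMk hg)]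

variable [IsProbabilityMeasure μ]

lemma sum_measureReal_preimage_singleton_eq_one (hf : Measurable f) :
    ∑ a, μ.real (f ⁻¹' {a}) = 1 := by
  rw [sum_measureReal_preimage_singleton _ fun a _ => hf (measurableSet_singleton a)]
  simp

lemma sum_measureReal_preimage_singleton_mul_comp (hf : Measurable f) (h : α → γ)
    (φ : γ → ℝ) :
    ∑ a, μ.real (f ⁻¹' {a}) * φ (h a) = ∑ c, μ.real ((h ∘ f) ⁻¹' {c}) * φ c := by
  classical
  have hfiber : ∀ c, μ.real ((h ∘ f) ⁻¹' {c}) = ∑ a with h a = c, μ.real (f ⁻¹' {a}) :=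
    by
    intro b
    rw [sum_measureReal_preimage_singleton _ fun a _ => hf (measurableSet_singleton a)]
    congr 1
    ext ω
    simp
  simp_rw [hfiber, Finset.sum_mul]
  rw [← Finset.sum_fiberwise Finset.univ h]
  refine Finset.sum_congr rfl fun c _ => Finset.sum_congr rfl fun a ha => ?_
  rw [(Finset.mem_filter.1 ha).2]

lemma sum_measureReal_pair_preimage_singleton {δ : Type*} [MeasurableSpace δ]
    [MeasurableSingletonClass δ] {g : Ω → δ} (hf : Measurable f) (hg : Measurable g) (b : δ) :
    ∑ a, μ.real ((fun ω => (f ω, g ω)) ⁻¹' {(a, b)}) = μ.real (g ⁻¹' {b}) := by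
  have := sum_measureReal_preimage_singleton (μ := μ) (Finset.univ ×ˢ {b})
    fun q _ => (hf.prodMk hg) (measurableSet_singleton q)
  rw [Finset.sum_product, Finset.sum_comm, Finset.sum_singleton] at this
  rw [this]
  congr 1
  ext ω
  simp [eq_comm]

lemma entropy_le_entropy_pair (hf : Measurable f) (hg : Measurable g) :
    entropy μ f ≤ entropy μ (fun ω => (f ω, g ω)) := by
  have hmarg : ∑ a, μ.real (f ⁻¹' {a}) * log (μ.real (f ⁻¹' {a})) =
      ∑ q, μ.real ((fun ω => (f ω, g ω)) ⁻¹' {q}) * log (μ.real (f ⁻¹' {q.1})) :=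
    (sum_measureReal_preimage_singleton_mul_comp (hf.prodMk hg) Prod.fst _).symm
  rw [entropy_eq_neg_sum, entropy_eq_neg_sum, hmarg]
  refine neg_le_neg (Finset.sum_le_sum fun q _ => ?_)
  rcases (measureReal_nonneg (μ := μ) (s := (fun ω => (f ω, g ω)) ⁻¹' {q})).eq_or_lt
    with hq | hq
  · simp [← hq]
  · exact mul_le_mul_of_nonneg_left
      (log_le_log hq (measureReal_preimage_singleton_le_comp μ _ Prod.fst q)) hq.le

lemma indepFun_iff_measureReal_pair_eq_mul (hf : Measurable f) (hg : Measurable g) :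
    IndepFun f g μ ↔ ∀ a b, μ.real ((fun ω => (f ω, g ω)) ⁻¹' {(a, b)}) =
      μ.real (f ⁻¹' {a}) * μ.real (g ⁻¹' {b}) := by
  have hpre : ∀ a b, (fun ω => (f ω, g ω)) ⁻¹' {(a, b)} = f ⁻¹' {a} ∩ g ⁻¹' {b} :=
    fun a b => by rw [← Set.singleton_prod_singleton, Set.mk_preimage_prod]
  simp only [hpre, measureReal_def, ← ENNReal.toReal_mul]
  refine ⟨fun h a b => ?_, fun h => ?_⟩
  · rw [h.measure_inter_preimage_eq_mul _ _ (measurableSet_singleton a)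
      (measurableSet_singleton b)]
  · rw [indepFun_iff_map_prod_eq_prod_map_map hf.aemeasurable hg.aemeasurable]
    refine Measure.ext_of_singleton fun ⟨a, b⟩ => ?_
    rw [Measure.map_apply (hf.prodMk hg) (measurableSet_singleton _), hpre,
      ← Set.singleton_prod_singleton, Measure.prod_prod,
      Measure.map_apply hf (measurableSet_singleton _),
      Measure.map_apply hg (measurableSet_singleton _)]
    exact (ENNReal.toReal_eq_toReal_iff' (measure_ne_top _ _) (by finiteness)).1 (h a b)

lemma sum_measureReal_pair_mul_log_mul (hf : Measurable f) (hg : Measurable g) :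
    ∑ q : α × β, μ.real ((fun ω => (f ω, g ω)) ⁻¹' {q}) *
        log (μ.real (f ⁻¹' {q.1}) * μ.real (g ⁻¹' {q.2})) =
      -(entropy μ f + entropy μ g) := by
  set P := fun ω => (f ω, g ω)
  have hsplit : ∀ q : α × β,
      μ.real (P ⁻¹' {q}) * log (μ.real (f ⁻¹' {q.1}) * μ.real (g ⁻¹' {q.2}))
      = μ.real (P ⁻¹' {q}) * log (μ.real (f ⁻¹' {q.1}))
        + μ.real (P ⁻¹' {q}) * log (μ.real (g ⁻¹' {q.2})) := by
    intro q
    have h₁ : μ.real (P ⁻¹' {q}) ≤ μ.real (f ⁻¹' {q.1}) :=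
      measureReal_preimage_singleton_le_comp μ P Prod.fst q
    have h₂ : μ.real (P ⁻¹' {q}) ≤ μ.real (g ⁻¹' {q.2}) :=
      measureReal_preimage_singleton_le_comp μ P Prod.snd q
    rcases (measureReal_nonneg (μ := μ) (s := P ⁻¹' {q})).eq_or_lt with hq | hq
    · simp [← hq]
    · rw [log_mul (hq.trans_le h₁).ne' (hq.trans_le h₂).ne', mul_add]
  have hfst : ∑ q : α × β, μ.real (P ⁻¹' {q}) * log (μ.real (f ⁻¹' {q.1})) =
      -entropy μ f := by
    rw [entropy_eq_neg_sum, neg_neg]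
    exact sum_measureReal_preimage_singleton_mul_comp (hf.prodMk hg) Prod.fst
      fun a => log (μ.real (f ⁻¹' {a}))
  have hsnd : ∑ q : α × β, μ.real (P ⁻¹' {q}) * log (μ.real (g ⁻¹' {q.2})) =
      -entropy μ g := by
    rw [entropy_eq_neg_sum, neg_neg]
    exact sum_measureReal_preimage_singleton_mul_comp (hf.prodMk hg) Prod.snd
      fun b => log (μ.real (g ⁻¹' {b}))
  rw [Finset.sum_congr rfl fun q _ => hsplit q, Finset.sum_add_distrib, hfst, hsnd, neg_add]

lemma sum_measureReal_mul_measureReal (hf : Measurable f) (hg : Measurable g) :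
    ∑ q : α × β, μ.real (f ⁻¹' {q.1}) * μ.real (g ⁻¹' {q.2}) = 1 := by
  simp only [Fintype.sum_prod_type]
  rw [← Finset.sum_mul_sum, sum_measureReal_preimage_singleton_eq_one hf,
    sum_measureReal_preimage_singleton_eq_one hg, one_mul]

theorem entropy_pair_le_add (hf : Measurable f) (hg : Measurable g) :
    entropy μ (fun ω => (f ω, g ω)) ≤ entropy μ f + entropy μ g := by
  rw [entropy_eq_neg_sum, neg_le, ← sum_measureReal_pair_mul_log_mul hf hg]
  refine sum_mul_log_le_sum_mul_log (fun _ => measureReal_nonneg)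
    (fun _ => mul_nonneg measureReal_nonneg measureReal_nonneg)
    measureReal_pair_eq_zero_of_mul_eq_zero ?_
  rw [sum_measureReal_mul_measureReal hf hg,
    sum_measureReal_preimage_singleton_eq_one (hf.prodMk hg)]

theorem entropy_pair_eq_add_iff_indepFun (hf : Measurable f) (hg : Measurable g) :
    entropy μ (fun ω => (f ω, g ω)) = entropy μ f + entropy μ g ↔ IndepFun f g μ := by
  rw [indepFun_iff_measureReal_pair_eq_mul hf hg, entropy_eq_neg_sum, neg_eq_iff_eq_neg,
    ← sum_measureReal_pair_mul_log_mul hf hg]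
  refine ⟨fun h a b => ?_, fun h => Finset.sum_congr rfl fun q _ => by rw [h q.1 q.2]⟩
  refine congrFun (eq_of_sum_mul_log_eq (fun _ => measureReal_nonneg)
    (fun _ => mul_nonneg measureReal_nonneg measureReal_nonneg)
    measureReal_pair_eq_zero_of_mul_eq_zero ?_ h.symm) (a, b)
  rw [sum_measureReal_mul_measureReal hf hg,
    sum_measureReal_preimage_singleton_eq_one (hf.prodMk hg)]

lemma sum_measureReal_pair_mul_log_cond (ρ : β → γ) (hf : Measurable f) (hg : Measurable g) :
    ∑ q : α × β, μ.real ((fun ω => (f ω, g ω)) ⁻¹' {q}) *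
        log (μ.real ((fun ω => (f ω, ρ (g ω))) ⁻¹' {(q.1, ρ q.2)}) *
          μ.real (g ⁻¹' {q.2}) / μ.real ((fun ω => ρ (g ω)) ⁻¹' {ρ q.2})) =
      -entropy μ (fun ω => (f ω, ρ (g ω))) - entropy μ g +
        entropy μ (fun ω => ρ (g ω)) := by
  set P := fun ω => (f ω, g ω)
  set Q := fun ω => (f ω, ρ (g ω))
  set C := fun ω => ρ (g ω)
  have hsplit : ∀ q : α × β, μ.real (P ⁻¹' {q}) *
      log (μ.real (Q ⁻¹' {(q.1, ρ q.2)}) * μ.real (g ⁻¹' {q.2}) /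
        μ.real (C ⁻¹' {ρ q.2}))
      = μ.real (P ⁻¹' {q}) * log (μ.real (Q ⁻¹' {(q.1, ρ q.2)}))
        + μ.real (P ⁻¹' {q}) * log (μ.real (g ⁻¹' {q.2}))
        - μ.real (P ⁻¹' {q}) * log (μ.real (C ⁻¹' {ρ q.2})) := by
    intro q
    have hQ : μ.real (P ⁻¹' {q}) ≤ μ.real (Q ⁻¹' {(q.1, ρ q.2)}) :=
      measureReal_preimage_singleton_le_comp μ P (fun q => (q.1, ρ q.2)) q
    have hG : μ.real (P ⁻¹' {q}) ≤ μ.real (g ⁻¹' {q.2}) :=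
      measureReal_preimage_singleton_le_comp μ P Prod.snd q
    have hC : μ.real (g ⁻¹' {q.2}) ≤ μ.real (C ⁻¹' {ρ q.2}) :=
      measureReal_preimage_singleton_le_comp μ g ρ q.2
    rcases (measureReal_nonneg (μ := μ) (s := P ⁻¹' {q})).eq_or_lt with hq | hq
    · simp [← hq]
    · rw [log_div (mul_pos (hq.trans_le hQ) (hq.trans_le hG)).ne'
          (hq.trans_le (hG.trans hC)).ne', log_mul (hq.trans_le hQ).ne' (hq.trans_le hG).ne']
      ring
  have hQ : ∑ q : α × β, μ.real (P ⁻¹' {q}) * log (μ.real (Q ⁻¹' {(q.1, ρ q.2)})) =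
      -entropy μ Q := by
    rw [entropy_eq_neg_sum, neg_neg]
    exact sum_measureReal_preimage_singleton_mul_comp (hf.prodMk hg) (fun q => (q.1, ρ q.2))
      fun s => log (μ.real (Q ⁻¹' {s}))
  have hG : ∑ q : α × β, μ.real (P ⁻¹' {q}) * log (μ.real (g ⁻¹' {q.2})) =
      -entropy μ g := by
    rw [entropy_eq_neg_sum, neg_neg]
    exact sum_measureReal_preimage_singleton_mul_comp (hf.prodMk hg) Prod.snd
      fun b => log (μ.real (g ⁻¹' {b}))
  have hC : ∑ q : α × β, μ.real (P ⁻¹' {q}) * log (μ.real (C ⁻¹' {ρ q.2})) =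
      -entropy μ C := by
    rw [entropy_eq_neg_sum, neg_neg]
    exact sum_measureReal_preimage_singleton_mul_comp (hf.prodMk hg) (fun q => ρ q.2)
      fun c => log (μ.real (C ⁻¹' {c}))
  rw [Finset.sum_congr rfl fun q _ => hsplit q, Finset.sum_sub_distrib, Finset.sum_add_distrib,
    hQ, hG, hC]
  ring

theorem condEntropy_le_condEntropy_comp [MeasurableSpace γ] [MeasurableSingletonClass γ]
    (hf : Measurable f) (hg : Measurable g) (ρ : β → γ) :
    condEntropy μ f g ≤ condEntropy μ f (fun ω => ρ (g ω)) := by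
  have hρg : Measurable fun ω => ρ (g ω) := (measurable_of_finite ρ).comp hg
  set P := fun ω => (f ω, g ω)
  set Q := fun ω => (f ω, ρ (g ω))
  set C := fun ω => ρ (g ω)
  have hQ : ∀ q, μ.real (P ⁻¹' {q}) ≤ μ.real (Q ⁻¹' {(q.1, ρ q.2)}) := fun q =>
    measureReal_preimage_singleton_le_comp μ P (fun q => (q.1, ρ q.2)) q
  have hG : ∀ q, μ.real (P ⁻¹' {q}) ≤ μ.real (g ⁻¹' {q.2}) := fun q =>
    measureReal_preimage_singleton_le_comp μ P Prod.snd q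
  have hC : ∀ b, μ.real (g ⁻¹' {b}) ≤ μ.real (C ⁻¹' {ρ b}) := fun b =>
    measureReal_preimage_singleton_le_comp μ g ρ b
  -- Gibbs' inequality against the probability weights `P(f, ρ ∘ g) P(g) / P(ρ ∘ g)`.
  have key : -entropy μ Q - entropy μ g + entropy μ C ≤ -entropy μ P := by
    rw [← sum_measureReal_pair_mul_log_cond ρ hf hg, entropy_eq_neg_sum μ P, neg_neg]
    refine sum_mul_log_le_sum_mul_log (fun _ => measureReal_nonneg) (fun _ => by positivity)
      (fun q hq => le_antisymm ?_ measureReal_nonneg) (le_of_eq ?_)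
    · rcases div_eq_zero_iff.1 hq with h | h
      · rcases mul_eq_zero.1 h with h | h
        · exact h ▸ hQ q
        · exact h ▸ hG q
      · exact h ▸ (hG q).trans (hC q.2)
    · rw [sum_measureReal_preimage_singleton_eq_one (hf.prodMk hg),
        ← sum_measureReal_preimage_singleton_eq_one (μ := μ) hg, Fintype.sum_prod_type_right]
      refine Finset.sum_congr rfl fun b _ => ?_
      dsimp only
      rw [← Finset.sum_div, ← Finset.sum_mul, sum_measureReal_pair_preimage_singleton hf hρg,
        mul_div_cancel_left_of_imp fun h => le_antisymm (h ▸ hC b) measureReal_nonneg]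
  rw [condEntropy, condEntropy]
  linarith

lemma condEntropy_le_entropy (hf : Measurable f) (hg : Measurable g) :
    condEntropy μ f g ≤ entropy μ f := by
  rw [condEntropy]
  linarith [entropy_pair_le_add (μ := μ) hf hg]

end Entropy

lemma _root_.ProbabilityTheory.iIndepFun.indepFun_fin {Ω β : Type*} [MeasurableSpace Ω]
    [MeasurableSpace β] {μ : Measure Ω} {f : ℕ → Ω → β} (h : iIndepFun f μ)
    (hf : ∀ i, Measurable (f i)) (n : ℕ) :
    IndepFun (f n) (fun ω (i : Fin n) => f i ω) μ := by
  have hφ : Measurable fun x : ({n} : Finset ℕ) → β => x ⟨n, Finset.mem_singleton_self n⟩ :=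
    measurable_pi_apply _
  have hψ : Measurable fun (x : Finset.range n → β) (i : Fin n) =>
      x ⟨i, Finset.mem_range.2 i.2⟩ :=
    measurable_pi_lambda _ fun _ => measurable_pi_apply _
  exact (h.indepFun_finset {n} (Finset.range n) (by simp) hf).comp hφ hψ

section Blocks

variable {Ω α : Type*} {T : Ω → Ω}

def block (T : Ω → Ω) (f : Ω → α) (n : ℕ) (ω : Ω) : Fin n → α :=
  fun i => f (T^[i] ω)

lemma measurable_block [MeasurableSpace Ω] [MeasurableSpace α] (hT : Measurable T)
    {f : Ω → α} (hf : Measurable f) (n : ℕ) : Measurable (block T f n) :=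
  measurable_pi_lambda _ fun i => hf.comp (hT.iterate i)

lemma block_succ (f : Ω → α) (n : ℕ) :
    block T f (n + 1) = fun ω => Fin.snoc (block T f n ω) (f (T^[n] ω)) := by
  funext ω i
  induction i using Fin.lastCases <;> simp [block]

lemma block_iterate_apply (f : Ω → α) (n t : ℕ) (ω : Ω) :
    block T f n (T^[t] ω) = fun i : Fin n => f (T^[i + t] ω) := by
  funext i
  rw [Function.iterate_add_apply]
  rfl

end Blocks

section BlockEntropy

variable {Ω α γ : Type*} [MeasurableSpace Ω] [Fintype α] [Fintype γ] {μ : Measure Ω}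
  {T : Ω → Ω}

lemma entropy_block_succ (f : Ω → α) (n : ℕ) :
    entropy μ (block T f (n + 1)) = entropy μ (fun ω => (f (T^[n] ω), block T f n ω)) := by
  have hinj : Function.Injective fun p : α × (Fin n → α) =>
      (Fin.snoc p.2 p.1 : Fin (n + 1) → α) := fun p q h =>
    Prod.ext (Fin.snoc_injective2 h).2 (Fin.snoc_injective2 h).1
  rw [block_succ]
  exact entropy_comp_of_injective (fun ω => (f (T^[n] ω), block T f n ω)) hinj

lemma entropy_block_succ_pair (f : Ω → α) (Y : Ω → γ) (n : ℕ) :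
    entropy μ (fun ω => (block T f (n + 1) ω, Y ω)) =
      entropy μ (fun ω => (f (T^[n] ω), (block T f n ω, Y ω))) := by
  have hinj : Function.Injective fun p : α × (Fin n → α) × γ =>
      ((Fin.snoc p.2.1 p.1 : Fin (n + 1) → α), p.2.2) := fun p q h => by
    obtain ⟨h₁, h₂⟩ := Prod.mk.inj h
    exact Prod.ext (Fin.snoc_injective2 h₁).2 (Prod.ext (Fin.snoc_injective2 h₁).1 h₂)
  have := entropy_comp_of_injective (μ := μ)
    (fun ω => (f (T^[n] ω), (block T f n ω, Y ω))) hinj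
  rw [block_succ]
  exact this

lemma entropy_block_zero_pair (f : Ω → α) (Y : Ω → γ) :
    entropy μ (fun ω => (block T f 0 ω, Y ω)) = entropy μ Y := by
  have hblock :
      (fun ω => (block T f 0 ω, Y ω)) = (fun y => ((default : Fin 0 → α), y)) ∘ Y :=
    funext fun ω => Prod.ext (Subsingleton.elim _ _) rfl
  rw [hblock, entropy_comp_of_injective Y fun _ _ h => (Prod.mk.inj h).2]

lemma entropy_block_pair_eq_add_sum (f : Ω → α) (Y : Ω → γ) (k : ℕ) :
    entropy μ (fun ω => (block T f k ω, Y ω)) = entropy μ Y + ∑ j ∈ Finset.range k,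
      condEntropy μ (fun ω => f (T^[j] ω)) (fun ω => (block T f j ω, Y ω)) := by
  induction k with
  | zero => simp [entropy_block_zero_pair]
  | succ k ih =>
    rw [Finset.sum_range_succ, ← add_assoc, ← ih, entropy_block_succ_pair, condEntropy]
    ring

end BlockEntropy

lemma nonpos_of_sub_mul_le_of_tendsto_div {a : ℕ → ℝ}
    (ha : Tendsto (fun n => a n / n) atTop (𝓝 0)) {K : ℕ} {δ : ℝ}
    (h : ∀ n, K ≤ n → ((n : ℝ) - K) * δ ≤ a n) : δ ≤ 0 := by
  have hlim : Tendsto (fun n : ℕ => ((n : ℝ) - K) * δ / n) atTop (𝓝 δ) := by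
    have : Tendsto (fun n : ℕ => δ - K * δ / n) atTop (𝓝 (δ - 0)) :=
      tendsto_const_nhds.sub (tendsto_const_div_atTop_nhds_zero_nat _)
    refine (sub_zero δ ▸ this).congr' ?_
    filter_upwards [eventually_ge_atTop 1] with n hn
    field_simp
  refine le_of_tendsto_of_tendsto hlim ha ?_
  filter_upwards [eventually_ge_atTop K] with n hn
  exact div_le_div_of_nonneg_right (h n hn) n.cast_nonneg

def HasZeroEntropy {Ω α : Type*} [MeasurableSpace Ω] [Fintype α] (μ : Measure Ω)
    (T : Ω → Ω) (x : Ω → α) : Prop :=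
  Tendsto (fun n : ℕ => entropy μ (block T x n) / n) atTop (𝓝 0)

section Disjointness

variable {Ω α β : Type*} [MeasurableSpace Ω] {μ : Measure Ω} [IsProbabilityMeasure μ]
  {T : Ω → Ω} [Fintype α] [MeasurableSpace α] [MeasurableSingletonClass α]
  [Fintype β] [MeasurableSpace β] [MeasurableSingletonClass β] {x : Ω → α} {e : Ω → β}

lemma entropy_block_of_iIndepFun (hT : MeasurePreserving T μ μ) (he : Measurable e)
    (hind : iIndepFun (fun i ω => e (T^[i] ω)) μ) (n : ℕ) :
    entropy μ (block T e n) = n * entropy μ e := by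
  induction n with
  | zero => simp [entropy_eq_zero_of_unique]
  | succ n ih =>
    have heT : Measurable fun ω => e (T^[n] ω) := he.comp (hT.measurable.iterate n)
    rw [entropy_block_succ, (entropy_pair_eq_add_iff_indepFun heT
      (measurable_block hT.measurable he n)).2
      (hind.indepFun_fin (fun i => he.comp (hT.measurable.iterate i)) n), ih,
      entropy_comp_of_measurePreserving (hT.iterate n) he]
    push_cast
    ring

lemma condEntropy_iterate_block_le (hT : MeasurePreserving T μ μ) (hx : Measurable x)
    (he : Measurable e) {k m j n : ℕ} (hkj : k ≤ j) (hjn : j + m ≤ n) :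
    condEntropy μ (fun ω => e (T^[j] ω)) (fun ω => (block T e j ω, block T x n ω)) ≤
      condEntropy μ (fun ω => e (T^[k] ω)) (fun ω => (block T e k ω, block T x m ω)) := by
  obtain ⟨t, rfl⟩ := Nat.exists_eq_add_of_le hkj
  let ρ : (Fin (k + t) → β) × (Fin n → α) → (Fin k → β) × (Fin m → α) := fun p =>
    (fun i => p.1 ⟨i + t, by omega⟩, fun i => p.2 ⟨i + t, by omega⟩)
  have hshift : (fun ω => ρ (block T e (k + t) ω, block T x n ω)) =
      fun ω => (block T e k (T^[t] ω), block T x m (T^[t] ω)) := by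
    funext ω
    simp only [ρ, block_iterate_apply]
    rfl
  calc _ ≤ condEntropy μ (fun ω => e (T^[k + t] ω))
        (fun ω => ρ (block T e (k + t) ω, block T x n ω)) :=
      condEntropy_le_condEntropy_comp (he.comp (hT.measurable.iterate _))
        ((measurable_block hT.measurable he _).prodMk (measurable_block hT.measurable hx _)) ρ
    _ = _ := by
      rw [hshift]
      simp only [Function.iterate_add_apply]
      exact condEntropy_comp_of_measurePreserving (f := fun ω => e (T^[k] ω))
        (g := fun ω => (block T e k ω, block T x m ω)) (hT.iterate t)
        (he.comp (hT.measurable.iterate k))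
        ((measurable_block hT.measurable he _).prodMk (measurable_block hT.measurable hx _))

lemma sub_mul_sub_condEntropy_le_entropy_block (hT : MeasurePreserving T μ μ) (hx : Measurable x)
    (he : Measurable e) (hind : iIndepFun (fun i ω => e (T^[i] ω)) μ) {k m n : ℕ}
    (hn : k + m ≤ n) :
    ((n : ℝ) - (k + m : ℕ)) * (entropy μ e -
      condEntropy μ (fun ω => e (T^[k] ω)) (fun ω => (block T e k ω, block T x m ω))) ≤
      entropy μ (block T x n) := by
  set d := condEntropy μ (fun ω => e (T^[k] ω)) (fun ω => (block T e k ω, block T x m ω))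
  set c : ℕ → ℝ := fun j =>
    condEntropy μ (fun ω => e (T^[j] ω)) (fun ω => (block T e j ω, block T x n ω))
  have hX := measurable_block hT.measurable hx n
  have hc : ∀ j, c j ≤ entropy μ e := fun j =>
    (condEntropy_le_entropy (he.comp (hT.measurable.iterate j))
      ((measurable_block hT.measurable he j).prodMk hX)).trans_eq
      (entropy_comp_of_measurePreserving (hT.iterate j) he)
  have hgood : ∀ j ∈ Finset.Ico k (n - m), c j ≤ d := fun j hj =>
    condEntropy_iterate_block_le hT hx he (Finset.mem_Ico.1 hj).1 (by grind)
  have hchain : n * entropy μ e ≤ entropy μ (block T x n) + ∑ j ∈ Finset.range n, c j :=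
    calc n * entropy μ e = entropy μ (block T e n) :=
          (entropy_block_of_iIndepFun hT he hind n).symm
      _ ≤ entropy μ (fun ω => (block T e n ω, block T x n ω)) :=
        entropy_le_entropy_pair (measurable_block hT.measurable he n) hX
      _ = _ := entropy_block_pair_eq_add_sum e (block T x n) n
  have hcount : ((n : ℝ) - (k + m : ℕ)) * (entropy μ e - d) ≤
      ∑ j ∈ Finset.range n, (entropy μ e - c j) :=
    calc ((n : ℝ) - (k + m : ℕ)) * (entropy μ e - d) =
          ∑ j ∈ Finset.Ico k (n - m), (entropy μ e - d) := by
          rw [Finset.sum_const, Nat.card_Ico, nsmul_eq_mul, Nat.sub_sub, Nat.cast_sub (by omega),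
            add_comm m]
      _ ≤ ∑ j ∈ Finset.Ico k (n - m), (entropy μ e - c j) :=
        Finset.sum_le_sum fun j hj => sub_le_sub_left (hgood j hj) _
      _ ≤ ∑ j ∈ Finset.range n, (entropy μ e - c j) :=
        Finset.sum_le_sum_of_subset_of_nonneg (fun j hj => by grind)
          fun j _ _ => sub_nonneg.2 (hc j)
  rw [Finset.sum_sub_distrib, Finset.sum_const, Finset.card_range, nsmul_eq_mul] at hcount
  linarith

lemma condEntropy_iterate_block_eq_entropy (hT : MeasurePreserving T μ μ) (hx : Measurable x)
    (he : Measurable e) (hind : iIndepFun (fun i ω => e (T^[i] ω)) μ)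
    (hzero : HasZeroEntropy μ T x) (k m : ℕ) :
    condEntropy μ (fun ω => e (T^[k] ω)) (fun ω => (block T e k ω, block T x m ω)) =
      entropy μ e := by
  refine le_antisymm ((condEntropy_le_entropy (he.comp (hT.measurable.iterate k))
    ((measurable_block hT.measurable he k).prodMk (measurable_block hT.measurable hx m))).trans_eq
    (entropy_comp_of_measurePreserving (hT.iterate k) he)) ?_
  have := nonpos_of_sub_mul_le_of_tendsto_div hzero (K := k + m) fun n hn =>
    sub_mul_sub_condEntropy_le_entropy_block hT hx he hind (k := k) (m := m) hn
  linarith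

theorem indepFun_block_of_hasZeroEntropy (hT : MeasurePreserving T μ μ) (hx : Measurable x)
    (he : Measurable e) (hind : iIndepFun (fun i ω => e (T^[i] ω)) μ)
    (hzero : HasZeroEntropy μ T x) (k m : ℕ) : IndepFun (block T e k) (block T x m) μ := by
  rw [← entropy_pair_eq_add_iff_indepFun (measurable_block hT.measurable he k)
    (measurable_block hT.measurable hx m), entropy_block_pair_eq_add_sum,
    entropy_block_of_iIndepFun hT he hind k]
  simp only [condEntropy_iterate_block_eq_entropy hT hx he hind hzero, Finset.sum_const,
    Finset.card_range, nsmul_eq_mul]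
  ring

end Disjointness

section Cylinders

variable {β : Type*}

def seqPrefix (n : ℕ) (ω : ℕ → β) : Fin n → β := fun i => ω i

def prefixCylinders (β : Type*) : Set (Set (ℕ → β)) :=
  {S | ∃ (n : ℕ) (w : Fin n → β), S = seqPrefix n ⁻¹' {w}}

lemma seqPrefix_preimage_inter_eq_right {n n' : ℕ} (h : n ≤ n') {w : Fin n → β}
    {w' : Fin n' → β} (hne : (seqPrefix n ⁻¹' {w} ∩ seqPrefix n' ⁻¹' {w'}).Nonempty) :
    seqPrefix n ⁻¹' {w} ∩ seqPrefix n' ⁻¹' {w'} = seqPrefix n' ⁻¹' {w'} := by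
  obtain ⟨ω₀, h₀, h₀'⟩ := hne
  refine Set.inter_eq_right.2 fun ω hω => ?_
  simp only [seqPrefix, Set.mem_preimage, Set.mem_singleton_iff, funext_iff] at h₀ h₀' hω ⊢
  intro i
  rw [← h₀ i, ← Fin.val_castLE h i, hω, ← h₀']

lemma isPiSystem_prefixCylinders : IsPiSystem (prefixCylinders β) := by
  rintro _ ⟨n, w, rfl⟩ _ ⟨n', w', rfl⟩ hne
  rcases le_total n n' with h | h
  · exact ⟨n', w', seqPrefix_preimage_inter_eq_right h hne⟩
  · rw [Set.inter_comm] at hne ⊢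
    exact ⟨n, w, seqPrefix_preimage_inter_eq_right h hne⟩

variable [MeasurableSpace β]

lemma measurable_seqPrefix (n : ℕ) : Measurable (seqPrefix (β := β) n) :=
  measurable_pi_lambda _ fun _ => measurable_pi_apply _

variable [MeasurableSingletonClass β] [Countable β]

lemma generateFrom_prefixCylinders :
    MeasurableSpace.generateFrom (prefixCylinders β) = MeasurableSpace.pi := by
  refine le_antisymm (MeasurableSpace.generateFrom_le ?_) (iSup_le fun i => ?_)
  · rintro _ ⟨n, w, rfl⟩
    exact measurable_seqPrefix n (measurableSet_singleton w)
  · have : Measurable[MeasurableSpace.generateFrom (prefixCylinders β)] (seqPrefix (i + 1)) :=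
      @measurable_to_countable' _ _ _ _ (_) _ fun w =>
        MeasurableSpace.measurableSet_generateFrom ⟨_, w, rfl⟩
    exact ((measurable_pi_apply (Fin.last i)).comp this).comap_le

theorem ext_of_prefixCylinders {μ ν : Measure (ℕ → β)} [IsFiniteMeasure μ]
    (h : ∀ n (w : Fin n → β), μ (seqPrefix n ⁻¹' {w}) = ν (seqPrefix n ⁻¹' {w})) :
    μ = ν := by
  refine ext_of_generate_finite _ generateFrom_prefixCylinders.symm isPiSystem_prefixCylinders
    (by rintro _ ⟨n, w, rfl⟩; exact h n w) ?_
  have huniv : seqPrefix 0 ⁻¹' {Fin.elim0} = (Set.univ : Set (ℕ → β)) :=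
    Set.eq_univ_of_forall fun _ => Subsingleton.elim _ _
  simpa [huniv] using h 0 Fin.elim0

end Cylinders

lemma _root_.ProbabilityTheory.iIndepFun.comp_of_map {ι Ω Ω' : Type*} {β : ι → Type*}
    [MeasurableSpace Ω] [MeasurableSpace Ω'] [∀ i, MeasurableSpace (β i)] {μ : Measure Ω}
    {h : Ω → Ω'} {f : ∀ i, Ω' → β i} (hh : Measurable h) (hf : ∀ i, Measurable (f i))
    (H : iIndepFun f (μ.map h)) : iIndepFun (fun i ω => f i (h ω)) μ := by
  rw [iIndepFun_iff_measure_inter_preimage_eq_mul] at H ⊢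
  intro S sets hsets
  have := H S hsets
  rw [Measure.map_apply hh (Finset.measurableSet_biInter S fun i hi => hf i (hsets i hi)),
    Finset.prod_congr rfl fun i hi => Measure.map_apply hh (hf i (hsets i hi))] at this
  rw [Set.preimage_iInter₂] at this
  exact this

section BinaryShift

lemma binShift_iterate_apply (t : ℕ) (a : ℕ → Bool) (i : ℕ) :
    binShift^[t] a i = a (i + t) := by
  induction t generalizing a with
  | zero => rfl
  | succ t ih => rw [Function.iterate_succ_apply, ih]; rfl

lemma measurable_binShift : Measurable binShift :=
  measurable_pi_lambda _ fun i => measurable_pi_apply (i + 1)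

lemma measurable_pairShift : Measurable pairShift :=
  measurable_binShift.prodMap measurable_binShift

def pairPrefix (n : ℕ) (q : (ℕ → Bool) × (ℕ → Bool)) : Fin n → Bool × Bool :=
  fun i => (q.1 i, q.2 i)

lemma measurable_pairPrefix (n : ℕ) : Measurable (pairPrefix n) := by
  unfold pairPrefix
  fun_prop

lemma block_prodMap_shift_fst (n : ℕ) :
    block (Prod.map pairShift binShift) (fun ω => (ω.1.1 0, ω.1.2 0)) n =
      fun ω => pairPrefix n ω.1 := by
  funext ω i
  simp [block, pairPrefix, pairShift, Prod.map_iterate, binShift_iterate_apply]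

lemma block_prodMap_shift_snd (n : ℕ) :
    block (Prod.map pairShift binShift) (fun ω => ω.2 0) n = fun ω => seqPrefix n ω.2 := by
  funext ω i
  simp [block, seqPrefix, Prod.map_iterate, binShift_iterate_apply]

variable {lam : Measure (((ℕ → Bool) × (ℕ → Bool)) × (ℕ → Bool))}

lemma hasZeroEntropy_of_hasZeroEntropyPair (h : HasZeroEntropyPair (lam.map Prod.fst)) :
    HasZeroEntropy lam (Prod.map pairShift binShift) (fun ω => (ω.1.1 0, ω.1.2 0)) := by
  refine h.congr fun n => congrArg (· / (n : ℝ)) (Finset.sum_congr rfl fun w _ => ?_)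
  have hset : {q : (ℕ → Bool) × (ℕ → Bool) | ∀ i : Fin n, (q.1 i, q.2 i) = w i} =
      pairPrefix n ⁻¹' {w} := by
    ext q
    simp [pairPrefix, funext_iff]
  rw [block_prodMap_shift_fst, hset,
    Measure.map_apply measurable_fst (measurable_pairPrefix n (measurableSet_singleton w))]
  rfl

lemma eq_prod_of_indepFun_block [IsProbabilityMeasure lam]
    (h : ∀ n, IndepFun (block (Prod.map pairShift binShift) (fun ω => ω.2 0) n)
      (block (Prod.map pairShift binShift) (fun ω => (ω.1.1 0, ω.1.2 0)) n) lam) :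
    lam = (lam.map Prod.fst).prod (lam.map Prod.snd) := by
  -- `ψ` merges the three coordinate sequences, so that the prefix cylinders of `ψ`
  -- are products of equal-length cylinders of the two factors.
  let ψ : ((ℕ → Bool) × (ℕ → Bool)) × (ℕ → Bool) ≃ᵐ (ℕ → (Bool × Bool) × Bool) :=
    ((MeasurableEquiv.arrowProdEquivProdArrow Bool Bool ℕ).symm.prodCongr
      (MeasurableEquiv.refl _)).trans (MeasurableEquiv.arrowProdEquivProdArrow _ _ ℕ).symm
  refine ψ.measurableEmbedding.map_injective (ext_of_prefixCylinders fun n w => ?_)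
  have hψ : ψ ⁻¹' (seqPrefix n ⁻¹' {w}) =
      (pairPrefix n ⁻¹' {fun i => (w i).1}) ×ˢ (seqPrefix n ⁻¹' {fun i => (w i).2}) := by
    have hcoord : ∀ ω, seqPrefix n (ψ ω) = fun i => (pairPrefix n ω.1 i, seqPrefix n ω.2 i) :=
      fun ω => rfl
    ext ω
    simp [hcoord, funext_iff, Prod.ext_iff, forall_and]
  have hind := h n
  rw [block_prodMap_shift_snd, block_prodMap_shift_fst] at hind
  rw [ψ.map_apply, ψ.map_apply, hψ, Measure.prod_prod,
    Measure.map_apply measurable_fst (measurable_pairPrefix n (measurableSet_singleton _)),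
    Measure.map_apply measurable_snd (measurable_seqPrefix n (measurableSet_singleton _)),
    Set.prod_eq, Set.inter_comm, mul_comm]
  exact hind.measure_inter_preimage_eq_mul _ _ (measurableSet_singleton _)
    (measurableSet_singleton _)

lemma iIndepFun_iterate_of_map_snd
    (h : iIndepFun (fun (i : ℕ) (ε : ℕ → Bool) => ε i) (lam.map Prod.snd)) :
    iIndepFun (fun i ω => ((Prod.map pairShift binShift)^[i] ω).2 0) lam := by
  have hcoord : (fun i ω => ((Prod.map pairShift binShift)^[i] ω).2 0) =
      fun (i : ℕ) (ω : ((ℕ → Bool) × (ℕ → Bool)) × (ℕ → Bool)) => ω.2 i := by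
    funext i ω
    simp [Prod.map_iterate, binShift_iterate_apply]
  rw [hcoord]
  exact h.comp_of_map measurable_snd measurable_pi_apply

end BinaryShift

end Furstenberg

open Furstenberg

theorem furstenberg_disjointness_general
    (lam₃ : Measure ((ℕ → Bool) × (ℕ → Bool)))
    (hzero : HasZeroEntropyPair lam₃)
    (η : Measure (ℕ → Bool))
    (hiid : iIndepFun
        (fun (i : ℕ) (ε : ℕ → Bool) => ε i) η)
    (lam : Measure (((ℕ → Bool) × (ℕ → Bool)) × (ℕ → Bool)))
    [IsProbabilityMeasure lam]
    (hlaminv : lam.map (Prod.map pairShift binShift) = lam)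
    (hfst : lam.map Prod.fst = lam₃) (hsnd : lam.map Prod.snd = η) :
    lam = lam₃.prod η := by
  subst hfst hsnd
  have hT : MeasurePreserving (Prod.map pairShift binShift) lam lam :=
    ⟨measurable_pairShift.prodMap measurable_binShift, hlaminv⟩
  exact eq_prod_of_indepFun_block fun n =>
    indepFun_block_of_hasZeroEntropy hT (by fun_prop) (by fun_prop)
      (iIndepFun_iterate_of_map_snd hiid) (hasZeroEntropy_of_hasZeroEntropyPair hzero) n n

/-- Furstenberg's disjointness theorem (special case): every shift-invariant
joining of a zero-entropy system with an i.i.d. Bernoulli system is the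
product joining. -/
theorem furstenberg_disjointness
    (p : ℝ) (hp0 : 0 < p) (hp1 : p < 1)
    (lam₃ : Measure ((ℕ → Bool) × (ℕ → Bool))) [IsProbabilityMeasure lam₃]
    (hlam₃inv : lam₃.map pairShift = lam₃)
    (hzero : HasZeroEntropyPair lam₃)
    (η : Measure (ℕ → Bool)) [IsProbabilityMeasure η]
    (hiid : iIndepFun
        (fun (i : ℕ) (ε : ℕ → Bool) => ε i) η)
    (hmarg : ∀ i : ℕ, η.map (fun ε : ℕ → Bool => ε i) = bernoulliBool p)
    (lam : Measure (((ℕ → Bool) × (ℕ → Bool)) × (ℕ → Bool)))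
    [IsProbabilityMeasure lam]
    (hlaminv : lam.map (Prod.map pairShift binShift) = lam)
    (hfst : lam.map Prod.fst = lam₃) (hsnd : lam.map Prod.snd = η) :
    lam = lam₃.prod η :=
  furstenberg_disjointness_general lam₃ hzero η hiid lam hlaminv hfst hsnd
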